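/- arXiv:2605.20243 — 5 statements merged into one kernel-verified Lean document; each statement's English description precedes it below -/
import Mathlib

section
/- For n=2m even, the permutation π(k)=k+m (mod n) of {1,...,n} has distance at least m² from the identity in the Cayley graph of S_n generated by the n transpositions along the cycle C_n. -/
/-!
Measure a permutation `σ` of the cycle by its total displacement `∑ₖ d(σ k, k)`, where `d` is the
distance in `C_n`. By the triangle inequality the total displacement is subadditive under
composition, and an adjacent transposition has total displacement at most `2`. The half shift
moves each of the `n = 2m` labels by exactly `m`, so its total displacement is `2m²`, and any word
in adjacent transpositions representing it has length at least `m²`.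
-/

/-- The transpositions along the cycle graph `C_n`: swaps of cyclically adjacent
positions `(i, i+1 mod n)`. -/
def cycleTranspositions (n : ℕ) [NeZero n] : Set (Equiv.Perm (Fin n)) :=
  { σ | ∃ i : Fin n, σ = Equiv.swap i (i + 1) }

open Equiv Finset

section TotalDisplacement

variable {α : Type*} [Fintype α] (d : α → α → ℕ)

def totalDisplacement (σ : Perm α) : ℕ := ∑ x, d (σ x) x

variable {d}

theorem totalDisplacement_mul_le (htri : ∀ x y z, d x z ≤ d x y + d y z) (σ τ : Perm α) :
    totalDisplacement d (σ * τ) ≤ totalDisplacement d σ + totalDisplacement d τ := by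
  calc ∑ x, d (σ (τ x)) x
      ≤ ∑ x, (d (σ (τ x)) (τ x) + d (τ x) x) := sum_le_sum fun x _ => htri _ _ _
    _ = totalDisplacement d σ + totalDisplacement d τ := by
      rw [sum_add_distrib, Equiv.sum_comp τ (fun y => d (σ y) y)]; rfl

theorem totalDisplacement_one (hd : ∀ x, d x x = 0) : totalDisplacement d 1 = 0 := by
  simp [totalDisplacement, hd]

theorem totalDisplacement_swap [DecidableEq α] (hd : ∀ x, d x x = 0) (x y : α) :
    totalDisplacement d (swap x y) = d y x + d x y := by
  rcases eq_or_ne x y with rfl | hxy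
  · rw [swap_self, ← Perm.one_def, totalDisplacement_one hd, hd]
  · rw [totalDisplacement, sum_eq_add_of_mem x y (mem_univ x) (mem_univ y) hxy, swap_apply_left,
      swap_apply_right]
    intro z _ hz
    rw [swap_apply_of_ne_of_ne hz.1 hz.2, hd]

theorem totalDisplacement_list_prod_le (hd : ∀ x, d x x = 0)
    (htri : ∀ x y z, d x z ≤ d x y + d y z) {C : ℕ} :
    ∀ l : List (Perm α), (∀ t ∈ l, totalDisplacement d t ≤ C) →
      totalDisplacement d l.prod ≤ C * l.length
  | [], _ => by simp [totalDisplacement_one hd]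
  | t :: l, hl => by
    rw [List.prod_cons, List.length_cons, mul_add_one, add_comm]
    exact (totalDisplacement_mul_le htri t l.prod).trans <| add_le_add (hl t List.mem_cons_self)
      (totalDisplacement_list_prod_le hd htri l fun s hs => hl s (List.mem_cons_of_mem t hs))

end TotalDisplacement

theorem ZMod.natAbs_valMinAbs_one_le (n : ℕ) [NeZero n] : (1 : ZMod n).valMinAbs.natAbs ≤ 1 :=
  ZMod.natAbs_min_of_le_div_two n _ 1 (by rw [ZMod.coe_valMinAbs, Int.cast_one])
    (ZMod.natAbs_valMinAbs_le _)

open Fin.CommRing in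
theorem ZMod.finEquiv_ofNat (n m : ℕ) [NeZero n] : ZMod.finEquiv n (Fin.ofNat n m) = m :=
  map_natCast _ m

section CyclicDist

variable {n : ℕ} [NeZero n]

/-- The graph distance between `a` and `b` in the cycle `C_n`. -/
def cyclicDist (a b : Fin n) : ℕ := (ZMod.finEquiv n (a - b)).valMinAbs.natAbs

theorem cyclicDist_self (a : Fin n) : cyclicDist a a = 0 := by
  simp [cyclicDist]

theorem cyclicDist_comm (a b : Fin n) : cyclicDist a b = cyclicDist b a := by
  rw [cyclicDist, cyclicDist, ← neg_sub, map_neg, ZMod.natAbs_valMinAbs_neg]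

theorem cyclicDist_triangle (a b c : Fin n) :
    cyclicDist a c ≤ cyclicDist a b + cyclicDist b c := by
  rw [cyclicDist, ← sub_add_sub_cancel a b c, map_add]
  exact (ZMod.natAbs_valMinAbs_add_le _ _).trans (Int.natAbs_add_le _ _)

theorem cyclicDist_add_self (a x : Fin n) :
    cyclicDist (a + x) a = (ZMod.finEquiv n x).valMinAbs.natAbs := by
  rw [cyclicDist, add_sub_cancel_left]

theorem cyclicDist_add_one_self_le (a : Fin n) : cyclicDist (a + 1) a ≤ 1 := by
  rw [cyclicDist_add_self, map_one]
  exact ZMod.natAbs_valMinAbs_one_le n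

theorem totalDisplacement_cyclicDist_le_two {t : Perm (Fin n)}
    (ht : t ∈ cycleTranspositions n) : totalDisplacement cyclicDist t ≤ 2 := by
  obtain ⟨i, rfl⟩ := ht
  rw [totalDisplacement_swap cyclicDist_self, cyclicDist_comm i]
  linarith [cyclicDist_add_one_self_le i]

theorem totalDisplacement_cyclicDist_addRight (x : Fin n) :
    totalDisplacement cyclicDist (Equiv.addRight x) =
      n * (ZMod.finEquiv n x).valMinAbs.natAbs := by
  simp [totalDisplacement, cyclicDist_add_self]

end CyclicDist

theorem half_shift_distance_lower_bound_general (n m : ℕ) [NeZero n]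
    (hn : n = 2 * m)
    (l : List (Equiv.Perm (Fin n)))
    (hl : ∀ t ∈ l, t ∈ cycleTranspositions n)
    (hprod : l.prod = Equiv.addRight (Fin.ofNat n m)) :
    m ^ 2 ≤ l.length := by
  have hupper : totalDisplacement cyclicDist l.prod ≤ 2 * l.length :=
    totalDisplacement_list_prod_le cyclicDist_self cyclicDist_triangle l
      fun t ht => totalDisplacement_cyclicDist_le_two (hl t ht)
  have hshift : (ZMod.finEquiv n (Fin.ofNat n m)).valMinAbs.natAbs = m := by
    have hm : m ≤ n / 2 := by omega
    rw [ZMod.finEquiv_ofNat, ZMod.valMinAbs_natCast_of_le_half hm, Int.natAbs_natCast]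
  rw [hprod, totalDisplacement_cyclicDist_addRight, hshift] at hupper
  nlinarith

/-- For `n = 2m` even, the half-shift permutation `π(k) = k + m (mod n)` has distance
at least `m²` from the identity in the Cayley graph of `S_n` generated by the `n`
transpositions along the cycle `C_n`. -/
theorem half_shift_distance_lower_bound (n m : ℕ) [NeZero n]
    (hn : n = 2 * m) (hm : 0 < m)
    (l : List (Equiv.Perm (Fin n)))
    (hl : ∀ t ∈ l, t ∈ cycleTranspositions n)
    (hprod : l.prod = Equiv.addRight (Fin.ofNat n m)) :
    m ^ 2 ≤ l.length :=
  half_shift_distance_lower_bound_general n m hn l hl hprod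
end

section
/- The diameter of the Cayley graph of S_{n+1} generated by the transpositions of the wheel graph W_{n+1} (center c connected to all rim vertices r_1,...,r_n, plus rim edges {r_i,r_{i+1}}) is at most ⌊3n/2⌋. -/
/-- The transpositions of the wheel graph `W_{n+1}`: the center `0` is connected to
all rim vertices `i.succ` (star edges) and cyclically consecutive rim vertices are
connected (rim edges). -/
def wheelTranspositions (n : ℕ) [NeZero n] : Set (Equiv.Perm (Fin (n + 1))) :=
  { σ | (∃ x : Fin (n + 1), x ≠ 0 ∧ σ = Equiv.swap 0 x) ∨
        (∃ i : Fin n, σ = Equiv.swap i.succ (i + 1).succ) }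

/-!
The star transpositions `(c x)` at the center already suffice. A cycle through `c` of length
`k + 1` is a product of `k` of them and a cycle of length `k ≥ 2` avoiding `c` one of
`k + 1 ≤ 3k/2`, so `σ` needs at most `3/2` star transpositions per rim vertex it moves, and one
fewer when it moves `c`. This bound is proved by induction on the number of moved rim vertices:
if `σ` moves `c`, then `σ * (c σc)` fixes `σc`; if `σ` fixes `c` but moves `x`, conjugating by
`(c x)` trades `x` for `c`, and the two extra transpositions are paid by the bonus of one granted
to permutations moving `c`.
-/

open Equiv Finset

namespace Equiv.Perm

variable {α : Type*} [DecidableEq α]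

def starTranspositions (c : α) : Set (Perm α) :=
  { t | ∃ x, x ≠ c ∧ t = swap c x }

variable [Fintype α]

theorem mem_support_mul_swap_imp_mem_support_ne {σ : Perm α} {c w : α}
    (hw : w ∈ (σ * swap c (σ c)).support) : w ∈ σ.support ∧ w ≠ σ c := by
  simp only [mem_support, swap_apply_def, mul_apply] at *
  grind

theorem card_support_mul_swap_erase_lt {σ : Perm α} {c : α} (hc : σ c ≠ c) :
    #((σ * swap c (σ c)).support.erase c) < #(σ.support.erase c) := by
  refine card_lt_card ((ssubset_iff_of_subset ?_).mpr ⟨σ c, ?_, ?_⟩)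
  · exact erase_subset_erase _ fun w hw => (mem_support_mul_swap_imp_mem_support_ne hw).1
  · exact mem_erase.mpr ⟨hc, mem_support.mpr fun h => hc (σ.injective h)⟩
  · exact fun h => (mem_support_mul_swap_imp_mem_support_ne (mem_of_mem_erase h)).2 rfl

theorem card_support_swap_conj_erase {σ : Perm α} {c x : α} (hc : σ c = c) (hx : σ x ≠ x) :
    (swap c x * σ * swap c x) c ≠ c ∧
      #((swap c x * σ * swap c x).support.erase c) + 1 = #(σ.support.erase c) := by
  have hconj : (swap c x * σ * swap c x).support = σ.support.map (swap c x).toEmbedding := by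
    rw [← support_conj, swap_inv]
  have hcμ : c ∈ (swap c x * σ * swap c x).support := by
    rw [hconj, mem_map_equiv, symm_swap, swap_apply_left]
    exact mem_support.mpr hx
  refine ⟨mem_support.mp hcμ, ?_⟩
  rw [card_erase_of_mem hcμ, hconj, card_map, erase_eq_of_notMem (notMem_support.mpr hc)]
  have : 0 < #σ.support := card_pos.mpr ⟨x, mem_support.mpr hx⟩
  omega

theorem exists_prod_starTranspositions (c : α) (σ : Perm α) :
    ∃ l : List (Perm α), (∀ t ∈ l, t ∈ starTranspositions c) ∧ l.prod = σ ∧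
      2 * l.length + (if σ c = c then 0 else 1) ≤ 3 * #(σ.support.erase c) := by
  induction hs : #(σ.support.erase c) using Nat.strong_induction_on generalizing σ with
  | _ s ih =>
  by_cases hσ : σ = 1
  · subst hσ
    exact ⟨[], by simp, by simp, by simp⟩
  by_cases hc : σ c = c
  · obtain ⟨x, hx⟩ : ∃ x, σ x ≠ x := by simpa [Perm.ext_iff] using hσ
    have hxc : x ≠ c := by rintro rfl; exact hx hc
    obtain ⟨hμc, hμs⟩ := card_support_swap_conj_erase hc hx
    obtain ⟨l, hl, hprod, hlen⟩ := ih _ (by omega) (swap c x * σ * swap c x) rfl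
    refine ⟨swap c x :: l ++ [swap c x], ?_, ?_, ?_⟩
    · simp only [List.mem_append, List.mem_cons, List.not_mem_nil, or_false]
      rintro t ((rfl | ht) | rfl)
      exacts [⟨x, hxc, rfl⟩, hl t ht, ⟨x, hxc, rfl⟩]
    · simp [hprod, mul_assoc]
    · simp only [hμc, hc, if_false, if_true, List.length_append, List.length_cons,
        List.length_nil] at hlen ⊢
      omega
  · obtain ⟨l, hl, hprod, hlen⟩ := ih _ (hs ▸ card_support_mul_swap_erase_lt hc) _ rfl
    refine ⟨l ++ [swap c (σ c)], ?_, ?_, ?_⟩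
    · simp only [List.mem_append, List.mem_cons, List.not_mem_nil, or_false]
      rintro t (ht | rfl)
      exacts [hl t ht, ⟨σ c, hc, rfl⟩]
    · simp [hprod, mul_assoc]
    · have := card_support_mul_swap_erase_lt hc
      simp only [hc, if_false, List.length_append, List.length_singleton] at hlen ⊢
      split_ifs at hlen <;> omega

theorem exists_prod_starTranspositions_two_mul_length_le (c : α) (σ : Perm α) :
    ∃ l : List (Perm α), (∀ t ∈ l, t ∈ starTranspositions c) ∧ l.prod = σ ∧
      2 * l.length ≤ 3 * (Fintype.card α - 1) := by
  obtain ⟨l, hl, hprod, hlen⟩ := exists_prod_starTranspositions c σ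
  have hcard : #(σ.support.erase c) ≤ Fintype.card α - 1 := by
    rw [← card_univ, ← card_erase_of_mem (mem_univ c)]
    exact card_le_card (erase_subset_erase _ (subset_univ _))
  exact ⟨l, hl, hprod, by omega⟩

end Equiv.Perm

/-- The diameter of the Cayley graph of `S_{n+1}` generated by the wheel-graph
transpositions is at most `⌊3n/2⌋`: every permutation is a product of at most
`⌊3n/2⌋` wheel transpositions. -/
theorem wheel_cayley_diameter_upper_bound (n : ℕ) [NeZero n]
    (σ : Equiv.Perm (Fin (n + 1))) :
    ∃ l : List (Equiv.Perm (Fin (n + 1))),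
      (∀ t ∈ l, t ∈ wheelTranspositions n) ∧ l.prod = σ ∧ l.length ≤ 3 * n / 2 := by
  obtain ⟨l, hl, hprod, hlen⟩ :=
    Perm.exists_prod_starTranspositions_two_mul_length_le (0 : Fin (n + 1)) σ
  rw [Fintype.card_fin, Nat.add_sub_cancel] at hlen
  exact ⟨l, fun t ht => Or.inl (hl t ht), hprod, by omega⟩
end

section
/- For n≥4, the diameter of the Cayley graph of S_{n+1} generated by the wheel-graph transpositions of W_{n+1} is at least n. -/
open Equiv Finset

namespace SimpleGraph

variable {V : Type*} [Fintype V] (G : SimpleGraph V)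

-- `edist` rather than `dist`, so that the triangle inequality holds without connectivity.
noncomputable def displacement (σ : Perm V) : ℕ∞ := ∑ x, G.edist (σ x) x

@[simp]
lemma displacement_one : G.displacement 1 = 0 := by simp [displacement]

variable {G} [DecidableEq V]

omit [Fintype V] in
lemma edist_swap_apply_le {a b : V} (hab : G.edist a b ≤ 1) (y z : V) :
    G.edist (swap a b y) z ≤ G.edist y z + if y ∈ ({a, b} : Finset V) then 1 else 0 := by
  by_cases ha : y = a
  · subst ha
    rw [swap_apply_left, if_pos (by simp)]
    calc G.edist b z ≤ G.edist b y + G.edist y z := G.edist_triangle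
      _ ≤ 1 + G.edist y z := by rw [G.edist_comm]; gcongr
      _ = G.edist y z + 1 := add_comm _ _
  by_cases hb : y = b
  · subst hb
    rw [swap_apply_right, if_pos (by simp)]
    calc G.edist a z ≤ G.edist a y + G.edist y z := G.edist_triangle
      _ ≤ 1 + G.edist y z := by gcongr
      _ = G.edist y z + 1 := add_comm _ _
  simp [swap_apply_of_ne_of_ne ha hb, ha, hb]

lemma displacement_swap_mul_le {a b : V} (hab : G.edist a b ≤ 1) (σ : Perm V) :
    G.displacement (swap a b * σ) ≤ G.displacement σ + 2 :=
  calc G.displacement (swap a b * σ)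
      ≤ ∑ x, (G.edist (σ x) x + if σ x ∈ ({a, b} : Finset V) then 1 else 0) :=
        sum_le_sum fun x _ ↦ edist_swap_apply_le hab (σ x) x
    _ = G.displacement σ + #{a, b} := by
        rw [sum_add_distrib, Equiv.sum_comp σ (fun y ↦ if y ∈ ({a, b} : Finset V) then 1 else 0),
          sum_boole, filter_mem_eq_inter, univ_inter]
        rfl
    _ ≤ G.displacement σ + 2 := by grw [card_le_two]; rfl

lemma displacement_list_prod_le (l : List (Perm V))
    (hl : ∀ t ∈ l, ∃ a b, G.edist a b ≤ 1 ∧ t = swap a b) :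
    G.displacement l.prod ≤ 2 * l.length := by
  induction l with
  | nil => simp
  | cons t l ih =>
    obtain ⟨a, b, hab, rfl⟩ := hl t List.mem_cons_self
    grw [List.prod_cons, displacement_swap_mul_le hab,
      ih fun s hs ↦ hl s (List.mem_cons_of_mem _ hs)]
    push_cast [List.length_cons]
    ring_nf
    rfl

end SimpleGraph

section Wheel

variable {n : ℕ} [NeZero n]

variable (n) in
def wheelGraph : SimpleGraph (Fin (n + 1)) :=
  SimpleGraph.fromRel fun x y ↦ x = 0 ∨ ∃ i : Fin n, x = i.succ ∧ y = (i + 1).succ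

def rimRotation (k : Fin n) : Perm (Fin (n + 1)) :=
  Perm.decomposeFin.symm (0, Equiv.addRight k)

@[simp]
lemma rimRotation_zero (k : Fin n) : rimRotation k 0 = 0 := by
  simp [rimRotation]

@[simp]
lemma rimRotation_succ (k i : Fin n) : rimRotation k i.succ = (i + k).succ := by
  simp [rimRotation]

namespace wheelGraph

lemma exists_swap_of_mem_wheelTranspositions {t : Perm (Fin (n + 1))}
    (ht : t ∈ wheelTranspositions n) :
    ∃ a b, (wheelGraph n).edist a b ≤ 1 ∧ t = swap a b := by
  simp only [SimpleGraph.edist_le_one_iff_adj_or_eq, wheelGraph, SimpleGraph.fromRel_adj]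
  rcases ht with ⟨x, hx, rfl⟩ | ⟨i, rfl⟩
  · exact ⟨0, x, Or.inl ⟨hx.symm, Or.inl (Or.inl rfl)⟩, rfl⟩
  · refine ⟨_, _, ?_, rfl⟩
    by_cases h : i.succ = (i + 1).succ
    · exact Or.inr h
    · exact Or.inl ⟨h, Or.inl (Or.inr ⟨i, rfl, rfl⟩)⟩

lemma not_adj_succ_add_succ {k : Fin n} (hk₁ : k ≠ 1) (hk_neg : k ≠ -1) (i : Fin n) :
    ¬(wheelGraph n).Adj (i + k).succ i.succ := by
  rintro ⟨-, (h | ⟨j, hj, hj'⟩) | (h | ⟨j, hj, hj'⟩)⟩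
  · exact Fin.succ_ne_zero _ h
  · rw [Fin.succ_inj] at hj hj'
    subst hj
    exact hk_neg (eq_neg_of_add_eq_zero_left (add_eq_left.mp (by rw [← add_assoc, ← hj'])))
  · exact Fin.succ_ne_zero _ h
  · rw [Fin.succ_inj] at hj hj'
    subst hj
    exact hk₁ (add_left_cancel hj')

lemma two_le_edist_succ_add_succ {k : Fin n} (hk₀ : k ≠ 0) (hk₁ : k ≠ 1) (hk_neg : k ≠ -1)
    (i : Fin n) : 2 ≤ (wheelGraph n).edist (i + k).succ i.succ := by
  have hne : (i + k).succ ≠ i.succ := by simpa [Fin.succ_inj] using hk₀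
  have h : ¬(wheelGraph n).edist (i + k).succ i.succ ≤ 1 := by
    rw [SimpleGraph.edist_le_one_iff_adj_or_eq]
    exact not_or.mpr ⟨not_adj_succ_add_succ hk₁ hk_neg i, hne⟩
  exact Order.add_one_le_of_lt (not_le.mp h)

lemma two_mul_le_displacement_rimRotation {k : Fin n} (hk₀ : k ≠ 0) (hk₁ : k ≠ 1)
    (hk_neg : k ≠ -1) : 2 * n ≤ (wheelGraph n).displacement (rimRotation k) := by
  rw [SimpleGraph.displacement, Fin.sum_univ_succ, rimRotation_zero, SimpleGraph.edist_self,
    zero_add]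
  calc (2 * n : ℕ∞) = ∑ _ : Fin n, 2 := by simp [mul_comm]
    _ ≤ _ := sum_le_sum fun i _ ↦ by simpa using two_le_edist_succ_add_succ hk₀ hk₁ hk_neg i

end wheelGraph

end Wheel

/-- For `n ≥ 4`, the diameter of the Cayley graph of `S_{n+1}` generated by the
wheel-graph transpositions of `W_{n+1}` is at least `n`: some permutation requires
at least `n` generators. -/
theorem wheel_cayley_diameter_lower_bound (n : ℕ) [NeZero n] (hn : 4 ≤ n) :
    ∃ σ : Equiv.Perm (Fin (n + 1)), ∀ l : List (Equiv.Perm (Fin (n + 1))),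
      (∀ t ∈ l, t ∈ wheelTranspositions n) → l.prod = σ → n ≤ l.length := by
  have h2 : (2 : Fin n) ≠ 0 ∧ (2 : Fin n) ≠ 1 ∧ (2 : Fin n) ≠ -1 := by
    simp [Fin.ext_iff, Fin.val_neg, Nat.mod_eq_of_lt (by omega : 2 < n),
      Nat.mod_eq_of_lt (by omega : 1 < n)]
    omega
  refine ⟨rimRotation 2, fun l hl hprod ↦ ?_⟩
  have hlower := wheelGraph.two_mul_le_displacement_rimRotation h2.1 h2.2.1 h2.2.2
  have hupper := SimpleGraph.displacement_list_prod_le l fun t ht ↦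
    wheelGraph.exists_swap_of_mem_wheelTranspositions (hl t ht)
  rw [hprod] at hupper
  have : 2 * n ≤ 2 * l.length := by exact_mod_cast hlower.trans hupper
  omega
end

section
/- The diameter of the Hanoi graph H_3^n (3 pegs, n disks) is 2^n−1; that is, any configuration can be transformed into any other in at most 2^n−1 moves, with equality attained by pairs of perfect states. -/
/-- One legal Hanoi move from configuration `f` to configuration `g`: some disk `d`
changes peg, all other disks stay, and no smaller disk lies on the source peg or on
the target peg of `d`. Configurations assign to each disk (`0` smallest) its peg. -/
def HanoiMove (n : ℕ) (f g : Fin n → Fin 3) : Prop :=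
  f ≠ g ∧ ∃ d : Fin n, (∀ e : Fin n, e ≠ d → f e = g e) ∧
    ∀ e : Fin n, e < d → f e ≠ f d ∧ f e ≠ g d

/-- The Hanoi graph `H_3^n`: vertices are the `n`-disk, `3`-peg configurations,
edges are single legal moves. -/
def hanoiGraph (n : ℕ) : SimpleGraph (Fin n → Fin 3) :=
  SimpleGraph.fromRel (HanoiMove n)

/-!
Upper bound, by induction on `k`: configurations that differ only in disks below `k + 1`
are joined by at most `2^(k+1) - 1` moves. If they differ in disk `k`, park the smaller
disks on the third peg (`2^k - 1` moves), move disk `k`, and finish on the smaller disks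
(`2^k - 1` moves).

Lower bound: whenever disk `d` moves, all smaller disks lie on the third peg. Going from a
tower of the `k + 1` smallest disks on `p` to one on `q ≠ p`, before the first move of
disk `k` the `k` smaller disks pass from a tower on `p` to a tower on another peg, and
after its last move (onto `q`) from a tower on a peg other than `q` to a tower on `q`; by
induction each phase costs at least `2^k - 1` moves.
-/

namespace SimpleGraph.Walk

variable {V : Type*} {G : SimpleGraph V}

theorem exists_split_at_boundary {u v : V} (W : G.Walk u v) (P : V → Prop) (hu : P u)
    (hv : ¬P v) :
    ∃ (x y : V) (W₁ : G.Walk u x) (_ : G.Adj x y) (W₂ : G.Walk y v),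
      P x ∧ ¬P y ∧ W.length = W₁.length + 1 + W₂.length := by
  induction W with
  | nil => exact absurd hu hv
  | @cons u w v h W ih =>
    by_cases hw : P w
    · obtain ⟨x, y, W₁, hxy, W₂, hx, hy, hlen⟩ := ih hw hv
      refine ⟨x, y, .cons h W₁, hxy, W₂, hx, hy, ?_⟩
      simp only [length_cons, hlen]
      omega
    · exact ⟨u, w, .nil, h, W, hu, hw, by simp only [length_cons, length_nil]; omega⟩

end SimpleGraph.Walk

namespace Hanoi

open SimpleGraph

/-- For `p ≠ q` this is the remaining peg, since `0 + 1 + 2 = 0` in `Fin 3`. -/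
def third (p q : Fin 3) : Fin 3 := -(p + q)

theorem third_ne_left {p q : Fin 3} (h : p ≠ q) : third p q ≠ p := by
  revert p q; decide

theorem third_ne_right {p q : Fin 3} (h : p ≠ q) : third p q ≠ q := by
  revert p q; decide

theorem third_comm (p q : Fin 3) : third p q = third q p := by
  rw [third, third, add_comm]

theorem eq_third {x p q : Fin 3} (h : p ≠ q) (hp : x ≠ p) (hq : x ≠ q) : x = third p q := by
  revert x p q; decide

variable {n : ℕ}

def IsTowerOn (k : ℕ) (p : Fin 3) (a : Fin n → Fin 3) : Prop :=
  ∀ e : Fin n, (e : ℕ) < k → a e = p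

theorem IsTowerOn.mono {k l : ℕ} {p : Fin 3} {a : Fin n → Fin 3} (h : IsTowerOn l p a)
    (hkl : k ≤ l) : IsTowerOn k p a :=
  fun e he => h e (he.trans_le hkl)

theorem isTowerOn_third_of_hanoiMove {f g : Fin n → Fin 3} (h : HanoiMove n f g) {d : Fin n}
    (hd : f d ≠ g d) :
    IsTowerOn d (third (f d) (g d)) f ∧ IsTowerOn d (third (f d) (g d)) g := by
  obtain ⟨-, d', hrest, hsmall⟩ := h
  obtain rfl : d = d' := by_contra fun hne => hd (hrest d hne)
  have hf : IsTowerOn d (third (f d) (g d)) f := fun e he =>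
    eq_third hd (hsmall e he).1 (hsmall e he).2
  exact ⟨hf, fun e he => hrest e (Fin.ne_of_lt he) ▸ hf e he⟩

theorem isTowerOn_third_of_adj {f g : Fin n → Fin 3} (h : (hanoiGraph n).Adj f g) {d : Fin n}
    (hd : f d ≠ g d) :
    IsTowerOn d (third (f d) (g d)) f ∧ IsTowerOn d (third (f d) (g d)) g := by
  rcases ((fromRel_adj _ _ _).mp h).2 with hfg | hgf
  · exact isTowerOn_third_of_hanoiMove hfg hd
  · rw [third_comm]
    exact (isTowerOn_third_of_hanoiMove hgf (Ne.symm hd)).symm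

theorem hanoiGraph_adj_update {a : Fin n → Fin 3} {d : Fin n} {p : Fin 3} (hp : a d ≠ p)
    (ha : IsTowerOn d (third (a d) p) a) : (hanoiGraph n).Adj a (Function.update a d p) := by
  have hne : a ≠ Function.update a d p := fun h => hp (by simpa using congrFun h d)
  refine (fromRel_adj _ _ _).mpr ⟨hne, .inl ⟨hne, d, fun e he => ?_, fun e he => ?_⟩⟩
  · exact (Function.update_of_ne he _ _).symm
  · rw [ha e he, Function.update_self]
    exact ⟨third_ne_left hp, third_ne_right hp⟩

theorem exists_walk_length_lt_two_pow (k : ℕ) {f g : Fin n → Fin 3}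
    (hfg : ∀ e : Fin n, k ≤ (e : ℕ) → f e = g e) :
    ∃ W : (hanoiGraph n).Walk f g, W.length < 2 ^ k := by
  induction k generalizing f g with
  | zero =>
    obtain rfl : f = g := funext fun e => hfg e (Nat.zero_le _)
    exact ⟨.nil, by simp⟩
  | succ k ih =>
    by_cases hagree : ∀ e : Fin n, k ≤ (e : ℕ) → f e = g e
    · obtain ⟨W, hW⟩ := ih hagree
      exact ⟨W, hW.trans (Nat.pow_lt_pow_succ one_lt_two)⟩
    push Not at hagree
    obtain ⟨d, hkd, hd⟩ := hagree
    have hdk : (d : ℕ) = k := by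
      by_contra hne
      exact hd (hfg d (by omega))
    set s := third (f d) (g d)
    set f₁ : Fin n → Fin 3 := fun e => if (e : ℕ) < k then s else f e with hf₁
    have hf₁d : f₁ d = f d := by simp [hf₁, hdk]
    obtain ⟨W₁, hW₁⟩ := ih (f := f) (g := f₁) fun e he => by simp [hf₁, Nat.not_lt.mpr he]
    have hmove : (hanoiGraph n).Adj f₁ (Function.update f₁ d (g d)) := by
      refine hanoiGraph_adj_update (hf₁d ▸ hd) fun e he => ?_
      rw [hf₁d]
      simp [hf₁, s, hdk ▸ he]
    obtain ⟨W₂, hW₂⟩ := ih (f := Function.update f₁ d (g d)) (g := g) fun e he => by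
      by_cases hed : e = d
      · subst hed
        exact Function.update_self ..
      · have hke : k < (e : ℕ) := lt_of_le_of_ne he fun h => hed (Fin.ext (hdk.trans h).symm)
        simp [Function.update_of_ne hed, hf₁, Nat.not_lt.mpr he, hfg e hke]
    refine ⟨W₁.append (.cons hmove W₂), ?_⟩
    simp only [Walk.length_append, Walk.length_cons, pow_succ]
    omega

theorem two_pow_le_length_add_one {k : ℕ} (hk : k ≤ n) {p q : Fin 3} (hpq : p ≠ q)
    {a b : Fin n → Fin 3} (ha : IsTowerOn k p a) (hb : IsTowerOn k q b)
    (W : (hanoiGraph n).Walk a b) : 2 ^ k ≤ W.length + 1 := by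
  induction k generalizing p q a b with
  | zero => simp
  | succ k ih =>
    let d : Fin n := ⟨k, hk⟩
    have had : a d = p := ha d k.lt_succ_self
    have hbd : b d = q := hb d k.lt_succ_self
    obtain ⟨c, c', W₁, hcc', W₂, hc, hc', hlen⟩ :=
      W.exists_split_at_boundary (· d = p) had (by simpa [hbd] using hpq.symm)
    have hmoved : c d ≠ c' d := hc ▸ Ne.symm hc'
    have htower := isTowerOn_third_of_adj hcc' hmoved
    have h₁ : 2 ^ k ≤ W₁.length + 1 :=
      ih (by omega) (hc ▸ (third_ne_left hmoved).symm) (ha.mono k.le_succ) htower.1 W₁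
    have h₂ : 2 ^ k ≤ W₂.length + 1 := by
      by_cases hq : c' d = q
      · exact ih (by omega) (hq ▸ third_ne_right hmoved) htower.2 (hb.mono k.le_succ) W₂
      · obtain ⟨e, e', W₃, hee', W₄, he, he', hlen'⟩ :=
          W₂.exists_split_at_boundary (· d ≠ q) hq (not_not.mpr hbd)
        rw [not_not] at he'
        have hmoved' : e d ≠ e' d := he'.symm ▸ he
        have h₄ := ih (by omega) (he' ▸ third_ne_right hmoved')
          (isTowerOn_third_of_adj hee' hmoved').2 (hb.mono k.le_succ) W₄
        omega
    rw [hlen, pow_succ]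
    omega

end Hanoi

/-- The diameter of the Hanoi graph `H_3^n` is `2^n - 1`: any configuration can be
transformed into any other in at most `2^n - 1` moves, with equality attained by
pairs of perfect states. -/
theorem hanoi_graph_diameter (n : ℕ) :
    (∀ f g : Fin n → Fin 3, (hanoiGraph n).dist f g ≤ 2 ^ n - 1) ∧
    (hanoiGraph n).dist (fun _ => (0 : Fin 3)) (fun _ => (2 : Fin 3)) = 2 ^ n - 1 := by
  have hwalk (f g : Fin n → Fin 3) : ∃ W : (hanoiGraph n).Walk f g, W.length < 2 ^ n :=
    Hanoi.exists_walk_length_lt_two_pow n fun e he => absurd e.is_lt (by omega)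
  have hupper (f g : Fin n → Fin 3) : (hanoiGraph n).dist f g ≤ 2 ^ n - 1 := by
    obtain ⟨W, hW⟩ := hwalk f g
    have := SimpleGraph.dist_le W
    omega
  refine ⟨hupper, le_antisymm (hupper _ _) ?_⟩
  obtain ⟨W, -⟩ := hwalk (fun _ => 0) (fun _ => 2)
  obtain ⟨P, hP⟩ := SimpleGraph.Reachable.exists_walk_length_eq_dist ⟨W⟩
  have := Hanoi.two_pow_le_length_add_one le_rfl (by decide : (0 : Fin 3) ≠ 2)
    (fun _ _ => rfl) (fun _ _ => rfl) P
  omega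
end

section
/- In the three-player 'truel' game on the 3-partite digraph with V₀={v,t₂}, V₁={p₁,p₂}, V₂={q,t₁} and edges v→p₁, v→p₂, p₁→t₁, p₂→q, q→t₂, no single player has a winning strategy, but each of the three two-player coalitions {V₀,V₁}, {V₀,V₂}, {V₁,V₂} has a winning strategy. -/
/-- The six positions of the truel game. -/
inductive Truel : Type
  | v | p1 | p2 | q | t1 | t2
  deriving DecidableEq

open Truel

/-- Which of the three players owns each position: `V₀ = {v, t₂}`,
`V₁ = {p₁, p₂}`, `V₂ = {q, t₁}`. -/
def truelPlayer : Truel → Fin 3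
  | v => 0 | t2 => 0
  | p1 => 1 | p2 => 1
  | q => 2 | t1 => 2

/-- The edges of the truel game graph. -/
def truelEdge (a b : Truel) : Prop :=
  (a, b) ∈ [(v, p1), (v, p2), (p1, t1), (p2, q), (q, t2)]

/-- The win set `A = S = {t₁, t₂}`. -/
def truelWinSet : Set Truel := {t1, t2}

/-- A game event in subgraph `H`: a maximal simple path starting at `v`. -/
def TruelEvent (H : Truel → Truel → Prop) (p : List Truel) : Prop :=
  (p ≠ [] ∧ p.head? = some v ∧ p.Chain' H ∧ p.Nodup) ∧
    ∀ x y, p.getLast? = some x → H x y → y ∈ p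

/-- Coalition `I` has a winning strategy: a subgraph `H` of the game graph,
removing only edges emanating from positions of players in `I`, such that every
game event in `H` ends with a last move made by a member of `I` into the win set. -/
def TruelCoalitionWins (I : Set (Fin 3)) : Prop :=
  ∃ H : Truel → Truel → Prop,
    (∀ a b, H a b → truelEdge a b) ∧
    (∀ a b, truelPlayer a ∉ I → truelEdge a b → H a b) ∧
    ∀ p, TruelEvent H p →
      ∃ r x y, p = r ++ [x, y] ∧ y ∈ truelWinSet ∧ truelPlayer x ∈ I

/-! The game graph has only two maximal plays, `v p₁ t₁`, won by `V₁`, and `v p₂ q t₂`, won by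
`V₂`; every event of a strategy is a prefix of one of them. A single player cannot avoid a play
won by somebody else: `V₂` owns no edge of `v p₁ t₁`; `V₁` can only cut `p₂ → q`, which leaves
the event `v p₂`, ending in a non-winning position; and `V₀` can only choose at `v`, where cutting
both edges leaves the event `v` without any move. Each pair wins: `{V₀, V₁}` and `{V₀, V₂}` by
letting `V₀` move to its partner's branch, and `{V₁, V₂}` without removing any edge. -/

instance : Fintype Truel :=
  ⟨{v, p1, p2, q, t1, t2}, fun x => by cases x <;> decide⟩

instance : DecidableRel truelEdge := fun _ _ => inferInstanceAs (Decidable (_ ∈ _))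

instance {H : Truel → Truel → Prop} [DecidableRel H] (p : List Truel) :
    Decidable (TruelEvent H p) :=
  inferInstanceAs (Decidable ((_ ∧ _ ∧ List.IsChain H p ∧ _) ∧ _))

def truelPathsFrom : Truel → List (List Truel)
  | v => [[v], [v, p1], [v, p1, t1], [v, p2], [v, p2, q], [v, p2, q, t2]]
  | p1 => [[p1], [p1, t1]]
  | p2 => [[p2], [p2, q], [p2, q, t2]]
  | q => [[q], [q, t2]]
  | t1 => [[t1]]
  | t2 => [[t2]]

lemma mem_truelPathsFrom_of_isChain {a : Truel} {l : List Truel}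
    (h : (a :: l).IsChain truelEdge) : a :: l ∈ truelPathsFrom a := by
  induction l generalizing a with
  | nil => cases a <;> decide
  | cons b l ih =>
    rw [List.isChain_cons_cons] at h
    have cons_mem : ∀ a b, truelEdge a b → ∀ m ∈ truelPathsFrom b, a :: m ∈ truelPathsFrom a := by
      decide
    exact cons_mem a b h.1 _ (ih h.2)

section Events

variable {H : Truel → Truel → Prop}

lemma TruelEvent.mem_truelPathsFrom (hH : ∀ a b, H a b → truelEdge a b) {p : List Truel}
    (hp : TruelEvent H p) : p ∈ truelPathsFrom v := by
  obtain ⟨⟨hne, hhead, hchain, -⟩, -⟩ := hp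
  obtain ⟨a, l, rfl⟩ := List.exists_cons_of_ne_nil hne
  obtain rfl : a = v := by simpa using hhead
  exact mem_truelPathsFrom_of_isChain (hchain.imp hH)

lemma truelEvent_of_isChain {l : List Truel} (hchain : (v :: l).IsChain H)
    (hnodup : (v :: l).Nodup) (hlast : ∀ y, ¬ H ((v :: l).getLast (List.cons_ne_nil _ _)) y) :
    TruelEvent H (v :: l) := by
  refine ⟨⟨List.cons_ne_nil _ _, rfl, hchain, hnodup⟩, fun x y hx hxy => ?_⟩
  rw [List.getLast?_eq_some_getLast (List.cons_ne_nil _ _), Option.some_inj] at hx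
  exact (hlast y (hx ▸ hxy)).elim

lemma truelEvent_v (hH : ∀ a b, H a b → truelEdge a b) (hp1 : ¬ H v p1) (hp2 : ¬ H v p2) :
    TruelEvent H [v] := by
  refine truelEvent_of_isChain (List.isChain_singleton v) (List.nodup_singleton v) fun y h => ?_
  obtain rfl | rfl : y = p1 ∨ y = p2 :=
    (by decide : ∀ y, truelEdge v y → y = p1 ∨ y = p2) y (hH _ _ h)
  exacts [hp1 h, hp2 h]

lemma truelEvent_v_p2 (hH : ∀ a b, H a b → truelEdge a b) (hp2 : H v p2) (hq : ¬ H p2 q) :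
    TruelEvent H [v, p2] := by
  refine truelEvent_of_isChain (by simpa using hp2) (by decide) fun y h => ?_
  obtain rfl : y = q := (by decide : ∀ y, truelEdge p2 y → y = q) y (hH _ _ h)
  exact hq h

lemma truelEvent_v_p1_t1 (hH : ∀ a b, H a b → truelEdge a b) (hp1 : H v p1) (ht1 : H p1 t1) :
    TruelEvent H [v, p1, t1] :=
  truelEvent_of_isChain (by simp [hp1, ht1]) (by decide) fun y h =>
    (by decide : ∀ y, ¬ truelEdge t1 y) y (hH _ _ h)

lemma truelEvent_v_p2_q_t2 (hH : ∀ a b, H a b → truelEdge a b) (hp2 : H v p2) (hq : H p2 q)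
    (ht2 : H q t2) : TruelEvent H [v, p2, q, t2] :=
  truelEvent_of_isChain (by simp [hp2, hq, ht2]) (by decide) fun y h =>
    (by decide : ∀ y, ¬ truelEdge t2 y) y (hH _ _ h)

end Events

def TruelEndsInWin (I : Set (Fin 3)) (p : List Truel) : Prop :=
  ∃ r x y, p = r ++ [x, y] ∧ y ∈ truelWinSet ∧ truelPlayer x ∈ I

section EndsInWin

variable {I : Set (Fin 3)}

lemma truelEndsInWin_append_pair_iff {l : List Truel} {a b : Truel} :
    TruelEndsInWin I (l ++ [a, b]) ↔ b ∈ truelWinSet ∧ truelPlayer a ∈ I := by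
  constructor
  · rintro ⟨r, x, y, h, hy, hx⟩
    obtain ⟨rfl, rfl⟩ : a = x ∧ b = y := by simpa using List.append_inj_right' h rfl
    exact ⟨hy, hx⟩
  · exact fun ⟨hb, ha⟩ => ⟨l, a, b, rfl, hb, ha⟩

lemma not_truelEndsInWin_singleton {a : Truel} : ¬ TruelEndsInWin I [a] := by
  rintro ⟨r, x, y, h, -⟩
  simpa using congrArg List.length h

lemma not_truelEndsInWin_v_p2 : ¬ TruelEndsInWin I [v, p2] := by
  simpa [truelWinSet] using truelEndsInWin_append_pair_iff (I := I) (l := []) (a := v) (b := p2)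

lemma truelEndsInWin_v_p1_t1_iff : TruelEndsInWin I [v, p1, t1] ↔ 1 ∈ I := by
  simpa [truelWinSet, truelPlayer] using
    truelEndsInWin_append_pair_iff (I := I) (l := [v]) (a := p1) (b := t1)

lemma truelEndsInWin_v_p2_q_t2_iff : TruelEndsInWin I [v, p2, q, t2] ↔ 2 ∈ I := by
  simpa [truelWinSet, truelPlayer] using
    truelEndsInWin_append_pair_iff (I := I) (l := [v, p2]) (a := q) (b := t2)

lemma truelCoalitionWins_of_strategy (H : Truel → Truel → Prop)
    (hH : ∀ a b, H a b → truelEdge a b)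
    (hkeep : ∀ a b, truelPlayer a ∉ I → truelEdge a b → H a b)
    (hwin : ∀ p ∈ truelPathsFrom v, TruelEvent H p → TruelEndsInWin I p) :
    TruelCoalitionWins I :=
  ⟨H, hH, hkeep, fun p hp => hwin p (hp.mem_truelPathsFrom hH) hp⟩

end EndsInWin

theorem not_truelCoalitionWins_zero : ¬ TruelCoalitionWins {0} := by
  rintro ⟨H, hH, hkeep, hwin⟩
  have ht1 : H p1 t1 := hkeep p1 t1 (by decide) (by decide)
  have hq : H p2 q := hkeep p2 q (by decide) (by decide)
  have ht2 : H q t2 := hkeep q t2 (by decide) (by decide)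
  by_cases hp1 : H v p1
  · exact absurd (truelEndsInWin_v_p1_t1_iff.1 (hwin _ (truelEvent_v_p1_t1 hH hp1 ht1)))
      (by decide)
  by_cases hp2 : H v p2
  · exact absurd (truelEndsInWin_v_p2_q_t2_iff.1 (hwin _ (truelEvent_v_p2_q_t2 hH hp2 hq ht2)))
      (by decide)
  exact not_truelEndsInWin_singleton (hwin _ (truelEvent_v hH hp1 hp2))

theorem not_truelCoalitionWins_one : ¬ TruelCoalitionWins {1} := by
  rintro ⟨H, hH, hkeep, hwin⟩
  have hp2 : H v p2 := hkeep v p2 (by decide) (by decide)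
  have ht2 : H q t2 := hkeep q t2 (by decide) (by decide)
  by_cases hq : H p2 q
  · exact absurd (truelEndsInWin_v_p2_q_t2_iff.1 (hwin _ (truelEvent_v_p2_q_t2 hH hp2 hq ht2)))
      (by decide)
  exact not_truelEndsInWin_v_p2 (hwin _ (truelEvent_v_p2 hH hp2 hq))

theorem not_truelCoalitionWins_two : ¬ TruelCoalitionWins {2} := by
  rintro ⟨H, hH, hkeep, hwin⟩
  have hp1 : H v p1 := hkeep v p1 (by decide) (by decide)
  have ht1 : H p1 t1 := hkeep p1 t1 (by decide) (by decide)
  exact absurd (truelEndsInWin_v_p1_t1_iff.1 (hwin _ (truelEvent_v_p1_t1 hH hp1 ht1))) (by decide)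

def truelEdgeWithout (e : Truel × Truel) (a b : Truel) : Prop :=
  truelEdge a b ∧ (a, b) ≠ e

instance (e : Truel × Truel) : DecidableRel (truelEdgeWithout e) :=
  fun _ _ => inferInstanceAs (Decidable (_ ∧ _))

theorem truelCoalitionWins_zero_one : TruelCoalitionWins {0, 1} := by
  refine truelCoalitionWins_of_strategy (truelEdgeWithout (v, p2)) (fun _ _ => And.left)
    (by decide) fun p hp hev => ?_
  obtain rfl : p = [v, p1, t1] := (by decide : ∀ p ∈ truelPathsFrom v,
    TruelEvent (truelEdgeWithout (v, p2)) p → p = [v, p1, t1]) p hp hev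
  exact truelEndsInWin_v_p1_t1_iff.2 (by simp)

theorem truelCoalitionWins_zero_two : TruelCoalitionWins {0, 2} := by
  refine truelCoalitionWins_of_strategy (truelEdgeWithout (v, p1)) (fun _ _ => And.left)
    (by decide) fun p hp hev => ?_
  obtain rfl : p = [v, p2, q, t2] := (by decide : ∀ p ∈ truelPathsFrom v,
    TruelEvent (truelEdgeWithout (v, p1)) p → p = [v, p2, q, t2]) p hp hev
  exact truelEndsInWin_v_p2_q_t2_iff.2 (by simp)

theorem truelCoalitionWins_one_two : TruelCoalitionWins {1, 2} := by
  refine truelCoalitionWins_of_strategy truelEdge (fun _ _ => id) (fun _ _ _ => id)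
    fun p hp hev => ?_
  obtain rfl | rfl : p = [v, p1, t1] ∨ p = [v, p2, q, t2] := (by decide : ∀ p ∈ truelPathsFrom v,
    TruelEvent truelEdge p → p = [v, p1, t1] ∨ p = [v, p2, q, t2]) p hp hev
  exacts [truelEndsInWin_v_p1_t1_iff.2 (by simp), truelEndsInWin_v_p2_q_t2_iff.2 (by simp)]

/-- In the truel game, no single player has a winning strategy, but each of the
three two-player coalitions has one. -/
theorem truel_coalitions :
    (∀ i : Fin 3, ¬ TruelCoalitionWins {i}) ∧
    TruelCoalitionWins {0, 1} ∧ TruelCoalitionWins {0, 2} ∧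
    TruelCoalitionWins {1, 2} := by
  refine ⟨fun i => ?_, truelCoalitionWins_zero_one, truelCoalitionWins_zero_two,
    truelCoalitionWins_one_two⟩
  fin_cases i
  exacts [not_truelCoalitionWins_zero, not_truelCoalitionWins_one, not_truelCoalitionWins_two]
end
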